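/- arXiv:1412.5544 — 2 statements merged into one kernel-verified Lean document; each statement's English description precedes it below -/
import Mathlib

section
/- A ring R is weakly nil-clean if and only if J(R) is nil and R/J(R) is weakly nil-clean. -/
/-!
Reduction modulo `J = J(R)` preserves weakly nil-clean decompositions. Conversely, when `J` is
nil, idempotents and nilpotence both lift from `R/J` to `R`, so decompositions lift as well.
Finally `J` is nil whenever `R` is weakly nil-clean: for `x = b ± e ∈ J`, the image of `e` in
`R/J` is idempotent and nilpotent, hence `e ∈ J`, and the only idempotent in `J` is `0`.
-/

/-- A ring is weakly nil-clean if every element is a sum or a difference of a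
nilpotent and an idempotent. -/
def IsWeaklyNilClean (R : Type*) [Ring R] : Prop :=
  ∀ a : R, ∃ b e : R, IsNilpotent b ∧ IsIdempotentElem e ∧ (a = b + e ∨ a = b - e)

theorem IsIdempotentElem.eq_zero_of_mem_jacobson_bot {R : Type*} [Ring R] {e : R}
    (he : IsIdempotentElem e) (hJ : e ∈ (⊥ : TwoSidedIdeal R).jacobson) : e = 0 := by
  obtain ⟨z, hz⟩ := TwoSidedIdeal.mem_jacobson_iff.mp hJ (-1)
  have hinv : z * (1 - e) = 1 := by
    rw [TwoSidedIdeal.mem_bot] at hz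
    calc z * (1 - e) = z * -1 * e + z - 1 + 1 := by noncomm_ring
      _ = 1 := by rw [hz, zero_add]
  calc e = z * (1 - e) * e := by rw [hinv, one_mul]
    _ = 0 := by rw [mul_assoc, he.one_sub_mul_self, mul_zero]

section

variable {R S : Type*} [Ring R] [Ring S]

theorem IsNilpotent.of_map_of_ker_isNilpotent {f : R →+* S}
    (hker : ∀ x ∈ RingHom.ker f, IsNilpotent x) {x : R} (hx : IsNilpotent (f x)) :
    IsNilpotent x := by
  obtain ⟨n, hn⟩ := hx
  obtain ⟨m, hm⟩ := hker (x ^ n) (by rwa [RingHom.mem_ker, map_pow])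
  exact ⟨n * m, by rwa [pow_mul]⟩

theorem IsWeaklyNilClean.of_surjective (f : R →+* S) (hf : Function.Surjective f)
    (h : IsWeaklyNilClean R) : IsWeaklyNilClean S := by
  intro s
  obtain ⟨a, rfl⟩ := hf s
  obtain ⟨b, e, hb, he, hab⟩ := h a
  refine ⟨f b, f e, hb.map f, he.map f, ?_⟩
  rcases hab with rfl | rfl
  · exact .inl (map_add f b e)
  · exact .inr (map_sub f b e)

theorem IsWeaklyNilClean.of_surjective_of_ker_isNilpotent (f : R →+* S)
    (hf : Function.Surjective f) (hker : ∀ x ∈ RingHom.ker f, IsNilpotent x)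
    (h : IsWeaklyNilClean S) : IsWeaklyNilClean R := by
  intro a
  obtain ⟨b', e', hb', he', hab'⟩ := h (f a)
  obtain ⟨e, he, rfl⟩ :=
    exists_isIdempotentElem_eq_of_ker_isNilpotent f hker e' (hf e') he'
  rcases hab' with hadd | hsub
  · refine ⟨a - e, e, .of_map_of_ker_isNilpotent hker ?_, he, .inl (sub_add_cancel a e).symm⟩
    rwa [map_sub, hadd, add_sub_cancel_right]
  · refine ⟨a + e, e, .of_map_of_ker_isNilpotent hker ?_, he, .inr (add_sub_cancel_right a e).symm⟩
    rwa [map_add, hsub, sub_add_cancel]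

theorem IsWeaklyNilClean.ker_isNilpotent (h : IsWeaklyNilClean R) (f : R →+* S)
    (hidem : ∀ e ∈ RingHom.ker f, IsIdempotentElem e → e = 0) :
    ∀ x ∈ RingHom.ker f, IsNilpotent x := by
  intro x hx
  obtain ⟨b, e, hb, he, hxb⟩ := h x
  have hfe : IsNilpotent (f e) := by
    rw [RingHom.mem_ker] at hx
    rcases hxb with rfl | rfl
    · rw [map_add] at hx
      rw [eq_neg_of_add_eq_zero_right hx]
      exact (hb.map f).neg
    · rw [map_sub, sub_eq_zero] at hx
      exact hx ▸ hb.map f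
  have he0 : e = 0 := hidem e ((he.map f).eq_zero_of_isNilpotent hfe) he
  rcases hxb with rfl | rfl <;> simpa [he0] using hb

end

theorem weaklyNilClean_iff_jacobson {R : Type*} [Ring R] :
    IsWeaklyNilClean R ↔
      (∀ x ∈ (⊥ : TwoSidedIdeal R).jacobson, IsNilpotent x) ∧
        IsWeaklyNilClean ((⊥ : TwoSidedIdeal R).jacobson.ringCon.Quotient) := by
  set J := (⊥ : TwoSidedIdeal R).jacobson
  have hsurj : Function.Surjective J.ringCon.mk' := J.ringCon.mk'_surjective
  have hker : ∀ x, x ∈ RingHom.ker J.ringCon.mk' ↔ x ∈ J := fun x => by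
    rw [RingHom.mem_ker, ← TwoSidedIdeal.mem_ker, TwoSidedIdeal.ker_ringCon_mk']
  constructor
  · intro h
    have hnil := h.ker_isNilpotent J.ringCon.mk' fun e he hidem =>
      hidem.eq_zero_of_mem_jacobson_bot ((hker e).mp he)
    exact ⟨fun x hx => hnil x ((hker x).mpr hx), h.of_surjective _ hsurj⟩
  · rintro ⟨hnil, hquot⟩
    exact hquot.of_surjective_of_ker_isNilpotent _ hsurj fun x hx => hnil x ((hker x).mp hx)
end

section
/- A ring R is nil-clean if and only if R is weakly nil-clean and 2 ∈ J(R). -/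
/-- A ring is nil-clean if every element is a sum of a nilpotent and an idempotent. -/
def IsNilClean (R : Type*) [Ring R] : Prop :=
  ∀ a : R, ∃ b e : R, IsNilpotent b ∧ IsIdempotentElem e ∧ a = b + e

section

variable {R : Type*} [Ring R]

namespace TwoSidedIdeal

theorem isUnit_mul_add_one_of_mem_jacobson_bot {x : R}
    (hx : x ∈ (⊥ : TwoSidedIdeal R).jacobson) (y : R) : IsUnit (y * x + 1) := by
  have left_inv : ∀ y, ∃ z, z * (y * x + 1) = 1 := fun y => by
    obtain ⟨z, hz⟩ := mem_jacobson_iff.mp hx y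
    exact ⟨z, by rwa [mem_bot, sub_eq_zero, mul_assoc, ← mul_add_one] at hz⟩
  obtain ⟨z, hz⟩ := left_inv y
  -- `z = 1 - z y x` has itself a left inverse, so `z` is a unit with inverse `y x + 1`.
  obtain ⟨w, hw⟩ := left_inv (-(z * y))
  have hz_eq : -(z * y) * x + 1 = z := by
    rw [← hz]
    noncomm_ring
  have hwz : w * z = 1 := by rwa [hz_eq] at hw
  have hw_eq : w = y * x + 1 := left_inv_eq_right_inv hwz hz
  exact ⟨⟨y * x + 1, z, hw_eq ▸ hwz, hz⟩, rfl⟩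

theorem isUnit_add_of_mem_jacobson_bot {u x : R} (hu : IsUnit u)
    (hx : x ∈ (⊥ : TwoSidedIdeal R).jacobson) : IsUnit (u + x) := by
  obtain ⟨u, rfl⟩ := hu
  have h : (u : R) + x = u * (↑u⁻¹ * x + 1) := by
    rw [mul_add_one, ← mul_assoc, u.mul_inv, one_mul, add_comm]
  rw [h]
  exact u.isUnit.mul (isUnit_mul_add_one_of_mem_jacobson_bot hx _)

theorem mem_jacobson_bot_of_isNilpotent {x : R} (hx : IsNilpotent x) (hcomm : ∀ y, Commute x y) :
    x ∈ (⊥ : TwoSidedIdeal R).jacobson := by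
  refine mem_jacobson_iff.mpr fun y => ?_
  obtain ⟨u, hu⟩ := ((hcomm y).symm.isNilpotent_mul_left hx).isUnit_add_one
  refine ⟨↑u⁻¹, ?_⟩
  rw [mem_bot, mul_assoc, ← mul_add_one, ← hu, u.inv_mul, sub_self]

end TwoSidedIdeal

theorem IsIdempotentElem.eq_zero_of_isUnit_one_sub {e : R} (he : IsIdempotentElem e)
    (hu : IsUnit (1 - e)) : e = 0 := by
  have h : 1 - e = 1 := (IsIdempotentElem.iff_eq_one_of_isUnit hu).mp he.one_sub
  rwa [sub_eq_self] at h

theorem IsNilpotent.add_mul_of_forall_commute {c n : R} (hc : IsNilpotent c)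
    (hcomm : ∀ y, Commute c y) (hn : IsNilpotent n) (x : R) : IsNilpotent (n + c * x) := by
  have pow_eq : ∀ j : ℕ, ∃ r, (n + c * x) ^ j = n ^ j + c * r := by
    intro j
    induction j with
    | zero => exact ⟨0, by simp⟩
    | succ j ih =>
      obtain ⟨r, hr⟩ := ih
      refine ⟨n ^ j * x + r * (n + c * x), ?_⟩
      have hswap : n ^ j * (c * x) = c * (n ^ j * x) := by
        rw [← mul_assoc, ← mul_assoc, (hcomm _).eq]
      rw [_root_.pow_succ, _root_.pow_succ, hr, add_mul, mul_add, hswap, mul_assoc c r, mul_add c,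
        add_assoc]
  obtain ⟨m, hm⟩ := hn
  obtain ⟨k, hk⟩ := hc
  obtain ⟨r, hr⟩ := pow_eq m
  refine ⟨m * k, ?_⟩
  rw [pow_mul, hr, hm, zero_add, (hcomm r).mul_pow, hk, zero_mul]

theorem IsNilClean.isWeaklyNilClean (h : IsNilClean R) : IsWeaklyNilClean R := fun a => by
  obtain ⟨b, e, hb, he, rfl⟩ := h a
  exact ⟨b, e, hb, he, .inl rfl⟩

theorem IsNilClean.isNilpotent_two (h : IsNilClean R) : IsNilpotent (2 : R) := by
  obtain ⟨n, e, hn, he, hsum⟩ := h (-1)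
  have he_unit : IsUnit e := by
    rw [show e = -(1 + n) by
      rw [eq_neg_iff_add_eq_zero, add_left_comm, add_comm e n, ← hsum, add_neg_cancel]]
    exact hn.isUnit_one_add.neg
  have he_one : e = 1 := (IsIdempotentElem.iff_eq_one_of_isUnit he_unit).mp he
  have hn_eq : n = -2 := by
    rw [he_one] at hsum
    rw [eq_sub_of_add_eq hsum.symm]
    norm_num
  simpa [hn_eq] using hn.neg

theorem IsWeaklyNilClean.isNilpotent_two (h : IsWeaklyNilClean R)
    (h2 : (2 : R) ∈ (⊥ : TwoSidedIdeal R).jacobson) : IsNilpotent (2 : R) := by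
  obtain ⟨m, f, hm, hf, hsum | hdiff⟩ := h 2
  · have hunit : IsUnit (1 - f) := by
      rw [show 1 - f = m - 1 by rw [eq_sub_of_add_eq hsum.symm, ← one_add_one_eq_two]; abel]
      exact hm.isUnit_sub_one
    rwa [hsum, hf.eq_zero_of_isUnit_one_sub hunit, add_zero]
  · have hunit : IsUnit (1 - f) := by
      rw [show 1 - f = (1 - m) + 2 by rw [sub_eq_iff_eq_add.mp hdiff.symm]; abel]
      exact TwoSidedIdeal.isUnit_add_of_mem_jacobson_bot hm.isUnit_one_sub h2
    rwa [hdiff, hf.eq_zero_of_isUnit_one_sub hunit, sub_zero]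

theorem IsWeaklyNilClean.isNilClean_of_isNilpotent_two (h : IsWeaklyNilClean R)
    (h2 : IsNilpotent (2 : R)) : IsNilClean R := fun a => by
  obtain ⟨n, e, hn, he, hsum | rfl⟩ := h a
  · exact ⟨n, e, hn, he, hsum⟩
  · -- `n - e = (n - 2e) + e`
    refine ⟨n + 2 * -e, e, h2.add_mul_of_forall_commute (Commute.ofNat_left 2) hn _, he, ?_⟩
    rw [two_mul]
    abel

end

theorem nilClean_iff_weaklyNilClean_two_mem_jacobson {R : Type*} [Ring R] :
    IsNilClean R ↔
      IsWeaklyNilClean R ∧ (2 : R) ∈ (⊥ : TwoSidedIdeal R).jacobson := by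
  constructor
  · intro h
    exact ⟨h.isWeaklyNilClean, TwoSidedIdeal.mem_jacobson_bot_of_isNilpotent h.isNilpotent_two
      (Commute.ofNat_left 2)⟩
  · rintro ⟨hw, h2⟩
    exact hw.isNilClean_of_isNilpotent_two (hw.isNilpotent_two h2)
end
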